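/- arXiv:1701.03684 — 7 statements merged into one kernel-verified Lean document; each statement's English description precedes it below -/
import Mathlib

section
/- For any positive integer k and complex number z with |z| ≤ 1 and Re(z) ≤ 0, the truncated Taylor series T_k(z) = ∑_{j=0}^k z^j/j! satisfies |T_k(z) - exp(z)| ≤ 1/(k+1)!. -/
/-!
Write `R_n(w) = exp w - ∑_{j<n} w^j/j!`. Then `R_{n+1}' = R_n`, and `‖R_0(w)‖ = e^{Re w} ≤ 1` on the
closed left half-plane. Since the segment `[0, z]` stays in that half-plane, comparing `t ↦ R_{n+1}(tz)`
with `t ↦ (t‖z‖)^{n+1}/(n+1)!` on `[0, 1]` gives `‖R_n(z)‖ ≤ ‖z‖^n/n!` by induction on `n`;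
for `‖z‖ ≤ 1` and `n = k + 1` this is the claim.
-/

open Finset Complex Nat

/-- `expTail n w` is `exp w` minus its Taylor polynomial of degree `n - 1`. -/
noncomputable def expTail (n : ℕ) (w : ℂ) : ℂ :=
  exp w - ∑ j ∈ range n, w ^ j / (j ! : ℂ)

lemma hasDerivAt_sum_range_succ_pow_div_factorial (n : ℕ) (w : ℂ) :
    HasDerivAt (fun w : ℂ => ∑ j ∈ range (n + 1), w ^ j / (j ! : ℂ))
      (∑ j ∈ range n, w ^ j / (j ! : ℂ)) w := by
  refine (HasDerivAt.fun_sum fun j _ => (hasDerivAt_pow j w).div_const (j ! : ℂ)).congr_deriv ?_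
  rw [sum_range_succ']
  simp only [CharP.cast_eq_zero, zero_mul, zero_div, add_zero, add_tsub_cancel_right]
  refine sum_congr rfl fun j _ => ?_
  rw [Nat.factorial_succ]; push_cast; field_simp

lemma hasDerivAt_expTail_succ (n : ℕ) (w : ℂ) :
    HasDerivAt (expTail (n + 1)) (expTail n w) w :=
  (hasDerivAt_exp w).sub (hasDerivAt_sum_range_succ_pow_div_factorial n w)

lemma norm_expTail_le {z : ℂ} (hz : z.re ≤ 0) (n : ℕ) : ‖expTail n z‖ ≤ ‖z‖ ^ n / n ! := by
  induction n generalizing z with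
  | zero => simpa [expTail, norm_exp] using hz
  | succ n ih =>
    have hg (t : ℝ) :
        HasDerivAt (fun t : ℝ => expTail (n + 1) (t * z)) (expTail n (t * z) * z) t :=
      ((hasDerivAt_expTail_succ n _).comp (t : ℂ) (hasDerivAt_mul_const z)).comp_ofReal
    have hB (t : ℝ) : HasDerivAt (fun t : ℝ => (t * ‖z‖) ^ (n + 1) / (n + 1)!)
        ((t * ‖z‖) ^ n / n ! * ‖z‖) t := by
      refine ((((hasDerivAt_id t).mul_const ‖z‖).pow (n + 1)).div_const _).congr_deriv ?_
      rw [Nat.factorial_succ]; push_cast; field_simp; simp [mul_comm]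
    have hbound (t : ℝ) (ht : t ∈ Set.Ico (0 : ℝ) 1) :
        ‖expTail n (t * z) * z‖ ≤ (t * ‖z‖) ^ n / n ! * ‖z‖ := by
      have htz : (t * z).re ≤ 0 := by
        simpa using mul_nonpos_of_nonneg_of_nonpos ht.1 hz
      rw [norm_mul]
      gcongr
      simpa [norm_mul, abs_of_nonneg ht.1] using ih htz
    simpa using image_norm_le_of_norm_deriv_right_le_deriv_boundary
      (fun t _ => (hg t).continuousAt.continuousWithinAt) (fun t _ => (hg t).hasDerivWithinAt)
      (by simp [expTail, sum_range_succ']) hB hbound (Set.right_mem_Icc.2 zero_le_one)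

open Finset in
theorem taylor_trunc_error_general (k : ℕ) (z : ℂ)
    (hz : ‖z‖ ≤ 1) (hre : z.re ≤ 0) :
    ‖(∑ j ∈ Finset.range (k + 1), z ^ j / (Nat.factorial j : ℂ)) - Complex.exp z‖ ≤
      1 / (Nat.factorial (k + 1) : ℝ) := by
  rw [norm_sub_rev]
  calc ‖expTail (k + 1) z‖ ≤ ‖z‖ ^ (k + 1) / (k + 1)! := norm_expTail_le hre (k + 1)
    _ ≤ 1 / (k + 1)! := by gcongr; exact pow_le_one₀ (norm_nonneg z) hz

open Finset in
theorem taylor_trunc_error (k : ℕ) (hk : 0 < k) (z : ℂ)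
    (hz : ‖z‖ ≤ 1) (hre : z.re ≤ 0) :
    ‖(∑ j ∈ Finset.range (k + 1), z ^ j / (Nat.factorial j : ℂ)) - Complex.exp z‖ ≤
      1 / (Nat.factorial (k + 1) : ℝ) :=
  taylor_trunc_error_general k z hz hre
end

section
/- For any positive integer k and complex number z with |z| ≤ 1 and Re(z) ≤ 0, the truncated Taylor series T_k(z) = ∑_{j=0}^k z^j/j! satisfies |T_k(z)| ≤ 1 + 1/(k+1)!. -/
/-!
Since `Re z ≤ 0` we have `‖exp z‖ ≤ 1`, so it suffices to bound the Taylor remainder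
`exp z - T_k(z)`. Differentiating `t ↦ exp (t z) * T_k (z (1 - t))` gives the integral form
`exp z - T_k(z) = z ^ (k + 1) / k! * ∫₀¹ (1 - t) ^ k exp (t z) dt`,
and `‖exp (t z)‖ ≤ 1` on `[0, 1]` bounds it by `‖z‖ ^ (k + 1) / (k + 1)!`.
-/

open Finset intervalIntegral Nat

noncomputable def expTrunc (k : ℕ) (z : ℂ) : ℂ :=
  ∑ j ∈ range (k + 1), z ^ j / (j ! : ℂ)

theorem expTrunc_succ (k : ℕ) (z : ℂ) :
    expTrunc (k + 1) z = expTrunc k z + z ^ (k + 1) / ((k + 1)! : ℂ) :=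
  sum_range_succ _ _

theorem expTrunc_zero_right (k : ℕ) : expTrunc k 0 = 1 := by
  simp [expTrunc, sum_range_succ']

theorem hasDerivAt_expTrunc (k : ℕ) (w : ℂ) :
    HasDerivAt (expTrunc k) (expTrunc k w - w ^ k / (k ! : ℂ)) w := by
  induction k with
  | zero =>
    rw [show expTrunc 0 = fun _ => 1 from funext fun w => by simp [expTrunc]]
    simpa using hasDerivAt_const w (1 : ℂ)
  | succ k ih =>
    have hterm :
        HasDerivAt (fun w : ℂ => w ^ (k + 1) / ((k + 1)! : ℂ)) (w ^ k / (k ! : ℂ)) w := by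
      refine ((hasDerivAt_pow (k + 1) w).div_const ((k + 1)! : ℂ)).congr_deriv ?_
      rw [Nat.factorial_succ, Nat.cast_mul, Nat.add_sub_cancel,
        mul_div_mul_left _ _ (Nat.cast_ne_zero.mpr k.succ_ne_zero)]
    rw [expTrunc_succ, add_sub_cancel_right, funext (expTrunc_succ k)]
    simpa only [sub_add_cancel] using ih.fun_add hterm

theorem hasDerivAt_exp_mul_expTrunc_one_sub (k : ℕ) (z : ℂ) (t : ℝ) :
    HasDerivAt (fun t : ℝ => Complex.exp (t * z) * expTrunc k (z * (1 - t)))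
      (z ^ (k + 1) / (k ! : ℂ) * ((1 - t) ^ k * Complex.exp (t * z))) t := by
  have hexp : HasDerivAt (fun s : ℂ => Complex.exp (s * z)) (Complex.exp (t * z) * z) t := by
    simpa using ((hasDerivAt_id (t : ℂ)).mul_const z).cexp
  have hinner : HasDerivAt (fun s : ℂ => z * (1 - s)) (-z) t := by
    simpa using ((hasDerivAt_id (t : ℂ)).const_sub 1).const_mul z
  refine (hexp.mul ((hasDerivAt_expTrunc k _).comp _ hinner)).comp_ofReal.congr_deriv ?_
  simp only [Function.comp_apply, mul_pow]
  ring

theorem exp_sub_expTrunc_eq_integral (k : ℕ) (z : ℂ) :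
    Complex.exp z - expTrunc k z =
      z ^ (k + 1) / (k ! : ℂ) * ∫ t in (0 : ℝ)..1, (1 - t) ^ k * Complex.exp (t * z) := by
  rw [← integral_const_mul, integral_eq_sub_of_hasDerivAt
    (fun t _ => hasDerivAt_exp_mul_expTrunc_one_sub k z t)
    (Continuous.intervalIntegrable (by fun_prop) _ _)]
  simp [expTrunc_zero_right]

theorem norm_integral_one_sub_pow_mul_exp_le (k : ℕ) {z : ℂ} (hre : z.re ≤ 0) :
    ‖∫ t in (0 : ℝ)..1, (1 - t) ^ k * Complex.exp (t * z)‖ ≤ 1 / (k + 1) := by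
  have hint : ∫ t in (0 : ℝ)..1, (1 - t) ^ k = 1 / (k + 1) := by
    simp [integral_comp_sub_left (fun s : ℝ => s ^ k) 1]
  rw [← hint]
  refine norm_integral_le_of_norm_le zero_le_one (Filter.Eventually.of_forall fun t ht => ?_)
    (Continuous.intervalIntegrable (by fun_prop) _ _)
  have h1t : ‖(1 - t : ℂ)‖ = 1 - t := by
    rw [← Complex.ofReal_one, ← Complex.ofReal_sub, Complex.norm_real, Real.norm_of_nonneg]
    linarith [ht.2]
  have hexp : ‖Complex.exp (t * z)‖ ≤ 1 := by
    rw [Complex.norm_exp, Real.exp_le_one_iff, Complex.re_ofReal_mul]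
    exact mul_nonpos_of_nonneg_of_nonpos ht.1.le hre
  rw [norm_mul, norm_pow, h1t]
  exact mul_le_of_le_one_right (pow_nonneg (by linarith [ht.2]) k) hexp

theorem norm_exp_sub_expTrunc_le (k : ℕ) {z : ℂ} (hre : z.re ≤ 0) :
    ‖Complex.exp z - expTrunc k z‖ ≤ ‖z‖ ^ (k + 1) / (k + 1)! := by
  rw [exp_sub_expTrunc_eq_integral, norm_mul, norm_div, norm_pow, Complex.norm_natCast]
  calc ‖z‖ ^ (k + 1) / k ! * ‖∫ t in (0 : ℝ)..1, (1 - t) ^ k * Complex.exp (t * z)‖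
      ≤ ‖z‖ ^ (k + 1) / k ! * (1 / (k + 1)) := by
        gcongr; exact norm_integral_one_sub_pow_mul_exp_le k hre
    _ = ‖z‖ ^ (k + 1) / (k + 1)! := by
        rw [Nat.factorial_succ]; push_cast; field_simp

open Finset in
theorem taylor_trunc_bound_general (k : ℕ) (z : ℂ)
    (hz : ‖z‖ ≤ 1) (hre : z.re ≤ 0) :
    ‖∑ j ∈ Finset.range (k + 1), z ^ j / (Nat.factorial j : ℂ)‖ ≤
      1 + 1 / (Nat.factorial (k + 1) : ℝ) := by
  have hexp : ‖Complex.exp z‖ ≤ 1 := by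
    rw [Complex.norm_exp]
    exact Real.exp_le_one_iff.mpr hre
  have hrem : ‖Complex.exp z - expTrunc k z‖ ≤ 1 / (k + 1)! :=
    (norm_exp_sub_expTrunc_le k hre).trans (by gcongr; exact pow_le_one₀ (norm_nonneg z) hz)
  calc ‖expTrunc k z‖ = ‖Complex.exp z - (Complex.exp z - expTrunc k z)‖ := by
        rw [sub_sub_cancel]
    _ ≤ ‖Complex.exp z‖ + ‖Complex.exp z - expTrunc k z‖ := norm_sub_le _ _
    _ ≤ 1 + 1 / (k + 1)! := add_le_add hexp hrem

open Finset in
theorem taylor_trunc_bound (k : ℕ) (hk : 0 < k) (z : ℂ)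
    (hz : ‖z‖ ≤ 1) (hre : z.re ≤ 0) :
    ‖∑ j ∈ Finset.range (k + 1), z ^ j / (Nat.factorial j : ℂ)‖ ≤
      1 + 1 / (Nat.factorial (k + 1) : ℝ) :=
  taylor_trunc_bound_general k z hz hre
end

section
/- Let b be a nonnegative integer and k ≥ 5 an integer with b ≤ k. For any complex z with |z| ≤ 1 and Re(z) ≤ 0, the shifted truncated exponential series T_{b,k}(z) = ∑_{j=b}^k (b!/j!) z^{j-b} satisfies |T_{b,k}(z)| ≤ √1.04. -/
/-!
Write `N = k - b`, so that `T_{b,k}(z) = ∑_{i ≤ N} z^i / (b+1)(b+2)⋯(b+i)`.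
For `b = 0` this is a partial sum of `exp z`, and `|exp z| ≤ 1` on the left half plane.
For `b ≥ 1` the cubic head `1 + a z + c z² + d z³` (with `a = 1/(b+1)`, `c = a/(b+2)`,
`d = c/(b+3)`) maps the left half of the unit disc into the unit disc, and the remaining
terms are dominated by a geometric series of total mass at most `2/120`. The weaker bound
`√1.04` is needed only in the linear case `N = 1`, where `b ≥ 4` and
`|1 + z/(b+1)|² ≤ 1 + 1/25`.
-/

open Finset Nat

theorem Complex.norm_one_add_mul_le {a : ℝ} (ha : 0 ≤ a) {z : ℂ} (hz : ‖z‖ ≤ 1)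
    (hre : z.re ≤ 0) : ‖1 + a * z‖ ≤ √(1 + a ^ 2) := by
  rw [norm_eq_sqrt_sq_add_sq, Real.sqrt_le_one] at hz
  rw [norm_eq_sqrt_sq_add_sq]
  refine Real.sqrt_le_sqrt ?_
  simp only [add_re, one_re, re_ofReal_mul, add_im, one_im, im_ofReal_mul, zero_add]
  nlinarith [mul_nonpos_of_nonneg_of_nonpos ha hre, mul_le_mul_of_nonneg_left hz (sq_nonneg a)]

theorem Complex.norm_cubic_le_one {a c d : ℝ} (ha : 0 ≤ a) (hc : 0 ≤ c) (hd : 0 ≤ d)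
    (h₁ : a ^ 2 + c ^ 2 + d ^ 2 ≤ 2 * c)
    (h₂ : a ^ 2 + c ^ 2 + d ^ 2 + 2 * c + 2 * a * d + 6 * d ≤ 2 * a)
    {z : ℂ} (hz : ‖z‖ ≤ 1) (hre : z.re ≤ 0) :
    ‖1 + a * z + c * z ^ 2 + d * z ^ 3‖ ≤ 1 := by
  rw [norm_eq_sqrt_sq_add_sq, Real.sqrt_le_one] at hz ⊢
  obtain ⟨x, y⟩ := z
  simp only [pow_succ, pow_zero, one_mul, add_re, add_im, mul_re, mul_im, one_re, one_im,
    ofReal_re, ofReal_im] at hz hre ⊢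
  have hu : 0 ≤ -x := by linarith
  have hs : 0 ≤ x * x + y * y := add_nonneg (mul_self_nonneg x) (mul_self_nonneg y)
  have hs₁ : 0 ≤ 1 - (x * x + y * y) := by linarith
  have hy₁ : 0 ≤ 1 - y ^ 2 := by nlinarith
  have hu₁ : 0 ≤ 1 - -x := by nlinarith
  -- with `u = -x` and `s = x² + y²`, `1 - |P(z)|²` is exactly this sum of nonnegative products
  linear_combination
    2 * mul_nonneg hd (pow_nonneg hu 3) + 6 * mul_nonneg (mul_nonneg hd hu) hy₁
    + mul_nonneg (mul_nonneg (sq_nonneg c) hs) hs₁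
    + mul_nonneg (mul_nonneg (mul_nonneg (sq_nonneg d) hs) hs₁)
        (by positivity : 0 ≤ 1 + (x * x + y * y))
    + 2 * mul_nonneg (mul_nonneg (mul_nonneg ha hc) hu) hs
    + 2 * mul_nonneg (mul_nonneg (mul_nonneg hc hd) (sq_nonneg (x * x + y * y))) hu
    + 2 * mul_nonneg (mul_nonneg (mul_nonneg ha hd) (sq_nonneg (-x))) hs₁
    + 2 * mul_nonneg (mul_nonneg (mul_nonneg ha hd) hs) (sq_nonneg y)
    + mul_nonneg (sq_nonneg y) (sub_nonneg.2 h₁)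
    + mul_nonneg (mul_nonneg hu hu₁)
        (by positivity : 0 ≤ a ^ 2 + c ^ 2 + d ^ 2 + 2 * c + 2 * a * d)
    + mul_nonneg hu (sub_nonneg.2 h₂)

theorem cubic_conditions_of_one_le {a c d B : ℝ} (hB : 1 ≤ B) (ha : a = (B + 1)⁻¹)
    (hc : c = a / (B + 2)) (hd : d = c / (B + 3)) :
    a ^ 2 + c ^ 2 + d ^ 2 ≤ 2 * c ∧
      a ^ 2 + c ^ 2 + d ^ 2 + 2 * c + 2 * a * d + 6 * d ≤ 2 * a := by
  obtain ⟨t, ht, rfl⟩ : ∃ t, 0 ≤ t ∧ B = t + 1 := ⟨B - 1, by linarith, by ring⟩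
  subst ha hc hd
  -- cleared of denominators, both differences are polynomials in `t` with nonnegative coefficients
  constructor <;> rw [← sub_nonneg] <;> field_simp <;> ring_nf <;> positivity

theorem norm_sum_range_div_ascFactorial_le_one {b n : ℕ} (hb : 1 ≤ b) (hn : n ≤ 4) (hn₂ : n ≠ 2)
    {z : ℂ} (hz : ‖z‖ ≤ 1) (hre : z.re ≤ 0) :
    ‖∑ i ∈ range n, z ^ i / ((b + 1).ascFactorial i : ℂ)‖ ≤ 1 := by
  set a : ℝ := ((b : ℝ) + 1)⁻¹ with ha
  set c : ℝ := a / (b + 2) with hc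
  set d : ℝ := c / (b + 3) with hd
  obtain ⟨h₁, h₂⟩ := cubic_conditions_of_one_le (by exact_mod_cast hb) ha hc hd
  have ha₀ : 0 ≤ a := by positivity
  have hc₀ : 0 ≤ c := by positivity
  have hd₀ : 0 ≤ d := by positivity
  interval_cases n
  · simp
  · simp
  · exact absurd rfl hn₂
  · convert Complex.norm_cubic_le_one ha₀ hc₀ le_rfl (by nlinarith) (by nlinarith) hz hre using 2
    simp only [sum_range_succ, sum_range_zero, ascFactorial_succ, ascFactorial_zero, a, c]
    push_cast
    field_simp
    ring
  · convert Complex.norm_cubic_le_one ha₀ hc₀ hd₀ h₁ h₂ hz hre using 2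
    simp only [sum_range_succ, sum_range_zero, ascFactorial_succ, ascFactorial_zero, a, c, d]
    push_cast
    field_simp
    ring

theorem sum_Ico_inv_ascFactorial_le {b m : ℕ} (h : 1 ≤ b + m) (N : ℕ) :
    ∑ i ∈ Ico m N, ((b + 1).ascFactorial i : ℝ)⁻¹ ≤ 2 / (b + 1).ascFactorial m := by
  have key (j : ℕ) : ((b + 1).ascFactorial m : ℝ) * 2 ^ j ≤ (b + 1).ascFactorial (m + j) := by
    rw [← ascFactorial_mul_ascFactorial]
    exact_mod_cast Nat.mul_le_mul_left _
      ((Nat.pow_le_pow_left (by omega) j).trans (pow_succ_le_ascFactorial _ j))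
  calc ∑ i ∈ Ico m N, ((b + 1).ascFactorial i : ℝ)⁻¹
      = ∑ j ∈ range (N - m), ((b + 1).ascFactorial (m + j) : ℝ)⁻¹ := sum_Ico_eq_sum_range _ _ _
    _ ≤ ∑ j ∈ range (N - m), ((b + 1).ascFactorial m : ℝ)⁻¹ * (1 / 2) ^ j := by
      gcongr with j
      rw [one_div, inv_pow, ← mul_inv]
      exact inv_anti₀ (by positivity) (key j)
    _ ≤ ((b + 1).ascFactorial m : ℝ)⁻¹ * 2 := by
      rw [← mul_sum]
      gcongr
      exact sum_geometric_two_le _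
    _ = 2 / (b + 1).ascFactorial m := by ring

theorem norm_sum_Ico_pow_div_ascFactorial_le {b m : ℕ} (h : 1 ≤ b + m) (N : ℕ) {z : ℂ}
    (hz : ‖z‖ ≤ 1) :
    ‖∑ i ∈ Ico m N, z ^ i / ((b + 1).ascFactorial i : ℂ)‖ ≤ 2 / (b + 1).ascFactorial m := by
  refine (norm_sum_le _ _).trans <|
    (sum_le_sum fun i _ => ?_).trans (sum_Ico_inv_ascFactorial_le h N)
  rw [norm_div, norm_pow, Complex.norm_natCast, ← one_div]
  gcongr
  exact pow_le_one₀ (norm_nonneg z) hz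

theorem norm_sum_range_div_ascFactorial_le {b N : ℕ} (hb : 1 ≤ b) (hN : N ≠ 1) {z : ℂ}
    (hz : ‖z‖ ≤ 1) (hre : z.re ≤ 0) :
    ‖∑ i ∈ range (N + 1), z ^ i / ((b + 1).ascFactorial i : ℂ)‖ ≤ 1 + 1 / 60 := by
  rcases le_or_gt N 3 with hN₃ | hN₃
  · exact (norm_sum_range_div_ascFactorial_le_one hb (by omega) (by omega) hz hre).trans
      (by norm_num)
  have h120 : (120 : ℝ) ≤ (b + 1).ascFactorial 4 := by
    exact_mod_cast ascFactorial_le 4 (by omega : 2 ≤ b + 1)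
  rw [← sum_range_add_sum_Ico _ (by omega : 4 ≤ N + 1)]
  refine (norm_add_le _ _).trans <| (add_le_add
    (norm_sum_range_div_ascFactorial_le_one hb le_rfl (by norm_num) hz hre)
    (norm_sum_Ico_pow_div_ascFactorial_le (by omega : 1 ≤ b + 4) _ hz)).trans ?_
  gcongr 1 + ?_
  rw [div_le_iff₀ (by positivity)]
  linarith

theorem norm_sum_range_two_div_ascFactorial_le {b : ℕ} (hb : 4 ≤ b) {z : ℂ} (hz : ‖z‖ ≤ 1)
    (hre : z.re ≤ 0) : ‖∑ i ∈ range 2, z ^ i / ((b + 1).ascFactorial i : ℂ)‖ ≤ √1.04 := by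
  have hsum : ∑ i ∈ range 2, z ^ i / ((b + 1).ascFactorial i : ℂ)
      = 1 + (((b : ℝ) + 1)⁻¹ : ℝ) * z := by
    simp [sum_range_succ, ascFactorial_succ, div_eq_inv_mul]
  rw [hsum]
  refine (Complex.norm_one_add_mul_le (by positivity) hz hre).trans (Real.sqrt_le_sqrt ?_)
  have hb' : (4 : ℝ) ≤ b := by exact_mod_cast hb
  have : ((b : ℝ) + 1)⁻¹ ≤ 5⁻¹ := inv_anti₀ (by norm_num) (by linarith)
  nlinarith [inv_nonneg.2 (by positivity : (0 : ℝ) ≤ b + 1)]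

theorem Complex.norm_sum_range_pow_div_factorial_le {z : ℂ} (hz : ‖z‖ ≤ 1) (hre : z.re ≤ 0)
    {n : ℕ} (hn : 0 < n) : ‖∑ i ∈ range n, z ^ i / (i ! : ℂ)‖ ≤ 1 + 2 / n ! := by
  have hexp : ‖exp z‖ ≤ 1 := by
    rw [norm_exp]
    exact Real.exp_le_one_iff.mpr hre
  have hcoeff : (n.succ : ℝ) * (n ! * n : ℝ)⁻¹ ≤ 2 / n ! := by
    rw [← div_eq_mul_inv, div_le_div_iff₀ (by positivity) (by positivity)]
    have : (1 : ℝ) ≤ n := by exact_mod_cast hn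
    push_cast
    nlinarith [(by positivity : (0 : ℝ) < n !)]
  calc ‖∑ i ∈ range n, z ^ i / (i ! : ℂ)‖
      ≤ ‖exp z‖ + ‖exp z - ∑ i ∈ range n, z ^ i / (i ! : ℂ)‖ := norm_le_norm_add_norm_sub _ _
    _ ≤ 1 + 1 * (2 / n !) := by
      refine add_le_add hexp ((exp_bound hz hn).trans ?_)
      exact mul_le_mul (pow_le_one₀ (norm_nonneg z) hz) hcoeff (by positivity) zero_le_one
    _ = 1 + 2 / n ! := by ring

theorem sum_Icc_factorial_div_eq_sum_range {b k : ℕ} (hb : b ≤ k) (z : ℂ) :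
    ∑ j ∈ Icc b k, (b ! : ℂ) * z ^ (j - b) / (j ! : ℂ) =
      ∑ i ∈ range (k - b + 1), z ^ i / ((b + 1).ascFactorial i : ℂ) := by
  rw [← Ico_add_one_right_eq_Icc, sum_Ico_eq_sum_range, Nat.sub_add_comm hb]
  refine sum_congr rfl fun i _ => ?_
  rw [Nat.add_sub_cancel_left, ← factorial_mul_ascFactorial, Nat.cast_mul,
    mul_div_mul_left _ _ (by exact_mod_cast factorial_ne_zero b)]

open Finset in
theorem shifted_taylor_trunc_bound (b k : ℕ) (hk : 5 ≤ k) (hb : b ≤ k) (z : ℂ)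
    (hz : ‖z‖ ≤ 1) (hre : z.re ≤ 0) :
    ‖∑ j ∈ Finset.Icc b k,
        (Nat.factorial b : ℂ) * z ^ (j - b) / (Nat.factorial j : ℂ)‖ ≤
      Real.sqrt 1.04 := by
  have h61 : (1 + 1 / 60 : ℝ) ≤ √1.04 := by
    rw [Real.le_sqrt (by norm_num) (by norm_num)]
    norm_num
  rw [sum_Icc_factorial_div_eq_sum_range hb]
  rcases Nat.eq_zero_or_pos b with rfl | hb₁
  · simp only [zero_add, one_ascFactorial, Nat.sub_zero]
    refine (Complex.norm_sum_range_pow_div_factorial_le hz hre k.succ_pos).trans (le_trans ?_ h61)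
    have h720 : (720 : ℝ) ≤ (k + 1)! := by
      exact_mod_cast factorial_le (by omega : 6 ≤ k + 1)
    gcongr 1 + ?_
    rw [div_le_iff₀ (by positivity)]
    linarith
  obtain hN | hN := eq_or_ne (k - b) 1
  · rw [hN]
    exact norm_sum_range_two_div_ascFactorial_le (by omega) hz hre
  · exact (norm_sum_range_div_ascFactorial_le hb₁ hN hz hre).trans h61
end

section
/- Let H be a Hilbert space and let ψ = α·(e₀ ⊗ ψ₀) + √(1−α²)·(e₁ ⊗ ψ₁) and φ = β·(e₀ ⊗ φ₀) + √(1−β²)·(e₁ ⊗ φ₁), where ψ₀, ψ₁, φ₀, φ₁ are unit vectors, α, β ∈ [0,1], and e₀, e₁ are orthonormal. If ‖ψ − φ‖ ≤ δ < α, then ‖φ₀ − ψ₀‖ ≤ 2δ/(α − δ). -/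
theorem component_state_dist {E : Type*} [NormedAddCommGroup E] [InnerProductSpace ℂ E]
    (ψ₀ ψ₁ φ₀ φ₁ : E) (hψ₀ : ‖ψ₀‖ = 1) (hψ₁ : ‖ψ₁‖ = 1) (hφ₀ : ‖φ₀‖ = 1) (hφ₁ : ‖φ₁‖ = 1)
    (α β δ : ℝ) (hα : α ∈ Set.Icc (0:ℝ) 1) (hβ : β ∈ Set.Icc (0:ℝ) 1)
    (ψ φ : WithLp 2 (E × E))
    (hψ : ψ = (WithLp.equiv 2 (E × E)).symm (α • ψ₀, Real.sqrt (1 - α ^ 2) • ψ₁))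
    (hφ : φ = (WithLp.equiv 2 (E × E)).symm (β • φ₀, Real.sqrt (1 - β ^ 2) • φ₁))
    (hd : ‖ψ - φ‖ ≤ δ) (hδ : δ < α) :
    ‖φ₀ - ψ₀‖ ≤ 2 * δ / (α - δ) := by
  obtain ⟨hα0, hα1⟩ := hα
  obtain ⟨hβ0, hβ1⟩ := hβ
  have hδ0 : 0 ≤ δ := le_trans (norm_nonneg _) hd
  have hfst : (ψ - φ).fst = α • ψ₀ - β • φ₀ := by
    subst hψ hφ; rfl
  have h1 : ‖α • ψ₀ - β • φ₀‖ ≤ δ := by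
    rw [← hfst]
    refine le_trans ?_ hd
    have := WithLp.prod_norm_sq_eq_of_L2 (ψ - φ)
    nlinarith [norm_nonneg (ψ - φ), norm_nonneg (ψ - φ).fst, norm_nonneg (ψ - φ).snd,
      sq_nonneg ‖(ψ - φ).snd‖]
  have hna : ‖α • ψ₀‖ = α := by rw [norm_smul, Real.norm_of_nonneg hα0, hψ₀, mul_one]
  have hnb : ‖β • φ₀‖ = β := by rw [norm_smul, Real.norm_of_nonneg hβ0, hφ₀, mul_one]
  have h2 : |α - β| ≤ δ := by
    calc |α - β| = |‖α • ψ₀‖ - ‖β • φ₀‖| := by rw [hna, hnb]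
    _ ≤ ‖α • ψ₀ - β • φ₀‖ := abs_norm_sub_norm_le _ _
    _ ≤ δ := h1
  have h3 : α * ‖φ₀ - ψ₀‖ ≤ 2 * δ := by
    have : α • φ₀ - α • ψ₀ = (α • φ₀ - β • φ₀) + (β • φ₀ - α • ψ₀) := by abel
    have hc : ‖α • φ₀ - α • ψ₀‖ ≤ 2 * δ := by
      rw [this]
      refine le_trans (norm_add_le _ _) ?_
      have e1 : ‖α • φ₀ - β • φ₀‖ = |α - β| := by
        rw [← sub_smul, norm_smul, Real.norm_eq_abs, hφ₀, mul_one]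
      have e2 : ‖β • φ₀ - α • ψ₀‖ = ‖α • ψ₀ - β • φ₀‖ := norm_sub_rev _ _
      rw [e1, e2]; linarith
    rwa [← smul_sub, norm_smul, Real.norm_of_nonneg hα0] at hc
  have hαδ : 0 < α - δ := by linarith
  rw [le_div_iff₀ hαδ]
  nlinarith [norm_nonneg (φ₀ - ψ₀)]
end

section
/- For every integer b with 1 ≤ b ≤ k, the sum ∑_{j=b}^k (b!/j!)² is at most 1 + 1/(b(b+2)), and in particular at most 4/3. -/
lemma fac_ratio_le (b : ℕ) : ∀ j, b ≤ j →
    (Nat.factorial b : ℝ) / (Nat.factorial j : ℝ) ≤ (1 / ((b : ℝ) + 1)) ^ (j - b) := by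
  intro j hj
  induction j, hj using Nat.le_induction with
  | base =>
    have h0 : (Nat.factorial b : ℝ) ≠ 0 := by positivity
    simp [div_self h0]
  | succ j hj ih =>
    have hfj : (0:ℝ) < Nat.factorial j := by positivity
    have h1 : (Nat.factorial b : ℝ) / (Nat.factorial (j+1) : ℝ)
        = (Nat.factorial b : ℝ) / (Nat.factorial j : ℝ) * (1 / ((j:ℝ)+1)) := by
      rw [Nat.factorial_succ]
      push_cast
      rw [div_mul_div_comm, mul_one, mul_comm]
    have h2 : (1:ℝ) / ((j:ℝ)+1) ≤ 1 / ((b:ℝ)+1) := by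
      apply one_div_le_one_div_of_le (by positivity)
      have : (b:ℝ) ≤ j := by exact_mod_cast hj
      linarith
    have hpos : (0:ℝ) ≤ (Nat.factorial b : ℝ) / (Nat.factorial j : ℝ) := by positivity
    have h3 : (Nat.factorial b : ℝ) / (Nat.factorial (j+1) : ℝ)
        ≤ (1 / ((b : ℝ) + 1)) ^ (j - b) * (1 / ((b:ℝ)+1)) := by
      rw [h1]
      apply mul_le_mul ih h2 (by positivity) (by positivity)
    rw [Nat.succ_sub hj, pow_succ]
    exact h3

open Finset in
theorem factorial_ratio_sq_sum_bound (b k : ℕ) (hb : 1 ≤ b) (hbk : b ≤ k) :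
    (∑ j ∈ Finset.Icc b k, ((Nat.factorial b : ℝ) / (Nat.factorial j : ℝ)) ^ 2) ≤
        1 + 1 / ((b : ℝ) * ((b : ℝ) + 2)) ∧
    (∑ j ∈ Finset.Icc b k, ((Nat.factorial b : ℝ) / (Nat.factorial j : ℝ)) ^ 2) ≤ 4 / 3 := by
  set q : ℝ := 1 / ((b : ℝ) + 1) ^ 2 with hq
  have hb1 : (1:ℝ) ≤ (b:ℝ) := by exact_mod_cast hb
  have hq0 : 0 ≤ q := by positivity
  have hq1 : q < 1 := by
    rw [hq, div_lt_one (by positivity)]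
    nlinarith
  have key : (∑ j ∈ Finset.Icc b k, ((Nat.factorial b : ℝ) / (Nat.factorial j : ℝ)) ^ 2)
      ≤ 1 + 1 / ((b : ℝ) * ((b : ℝ) + 2)) := by
    have h1 : (∑ j ∈ Finset.Icc b k, ((Nat.factorial b : ℝ) / (Nat.factorial j : ℝ)) ^ 2)
        ≤ ∑ j ∈ Finset.Icc b k, q ^ (j - b) := by
      apply Finset.sum_le_sum
      intro j hj
      have hbj : b ≤ j := (Finset.mem_Icc.mp hj).1
      have := fac_ratio_le b j hbj
      have hnn : (0:ℝ) ≤ (Nat.factorial b : ℝ) / (Nat.factorial j : ℝ) := by positivity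
      calc ((Nat.factorial b : ℝ) / (Nat.factorial j : ℝ)) ^ 2
          ≤ ((1 / ((b : ℝ) + 1)) ^ (j - b)) ^ 2 := by
            exact pow_le_pow_left₀ hnn this 2
        _ = q ^ (j - b) := by
            rw [hq, ← pow_mul, mul_comm, pow_mul, div_pow, one_pow]
    have h2 : ∑ j ∈ Finset.Icc b k, q ^ (j - b)
        = ∑ i ∈ Finset.range (k + 1 - b), q ^ i := by
      rw [← Finset.Ico_add_one_right_eq_Icc, Finset.sum_Ico_eq_sum_range]
      apply Finset.sum_congr rfl
      intro i _
      congr 1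
      omega
    have h3 : ∑ i ∈ Finset.range (k + 1 - b), q ^ i ≤ (1 - q)⁻¹ := by
      rw [geom_sum_eq (ne_of_lt hq1) (k + 1 - b)]
      have hd : (0:ℝ) < 1 - q := by linarith
      have heq : (q ^ (k + 1 - b) - 1) / (q - 1) = (1 - q ^ (k + 1 - b)) / (1 - q) := by
        rw [div_eq_div_iff (by linarith) (by linarith)]
        ring
      rw [heq, inv_eq_one_div]
      have hqn : 0 ≤ q ^ (k + 1 - b) := by positivity
      gcongr
      linarith
    have h4 : (1 - q)⁻¹ = 1 + 1 / ((b : ℝ) * ((b : ℝ) + 2)) := by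
      have hx : (0:ℝ) < (b : ℝ) * ((b : ℝ) + 2) := by nlinarith
      have e1 : 1 - q = ((b:ℝ) * ((b:ℝ) + 2)) / ((b:ℝ) + 1) ^ 2 := by
        have hp : (0:ℝ) < ((b:ℝ) + 1) ^ 2 := by positivity
        rw [hq, eq_div_iff hp.ne', sub_mul, one_mul, div_mul_cancel₀ _ hp.ne']
        ring
      rw [e1, inv_div, div_eq_iff hx.ne', add_mul, one_mul, div_mul_cancel₀ _ hx.ne']
      ring
    calc _ ≤ ∑ j ∈ Finset.Icc b k, q ^ (j - b) := h1
      _ = ∑ i ∈ Finset.range (k + 1 - b), q ^ i := h2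
      _ ≤ (1 - q)⁻¹ := h3
      _ = _ := by rw [h4]
  refine ⟨key, key.trans ?_⟩
  have : 1 / ((b : ℝ) * ((b : ℝ) + 2)) ≤ 1 / 3 := by
    apply one_div_le_one_div_of_le (by norm_num)
    nlinarith
  linarith
end

section
/- Let k := ⌊2 log Ω / log log Ω⌋ for a real number Ω ≥ 70. Then (k+1)! ≥ Ω. -/
lemma pow_le_exp_pow_mul_factorial (n : ℕ) :
    (n : ℝ) ^ n ≤ Real.exp 1 ^ n * Nat.factorial n := by
  induction n with
  | zero => simp
  | succ n ih =>
    have hstep : ((n : ℝ) + 1) ^ n ≤ Real.exp 1 * (n : ℝ) ^ n := by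
      rcases Nat.eq_zero_or_pos n with h0 | hpos
      · subst h0
        simpa using Real.one_le_exp (by norm_num : (0:ℝ) ≤ 1)
      · have hn : (0 : ℝ) < n := by exact_mod_cast hpos
        have h1 : (n : ℝ) + 1 ≤ (n : ℝ) * Real.exp (1 / n) := by
          have := Real.add_one_le_exp (1 / (n : ℝ))
          calc (n : ℝ) + 1 = (n : ℝ) * (1 / n + 1) := by field_simp; ring
            _ ≤ (n : ℝ) * Real.exp (1 / n) := by
                exact mul_le_mul_of_nonneg_left this (le_of_lt hn)
        have h2 : ((n : ℝ) + 1) ^ n ≤ ((n : ℝ) * Real.exp (1 / n)) ^ n := by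
          apply pow_le_pow_left₀ (by positivity) h1
        have h3 : ((n : ℝ) * Real.exp (1 / n)) ^ n = (n : ℝ) ^ n * Real.exp 1 := by
          rw [mul_pow, ← Real.exp_nat_mul]
          congr 1
          field_simp
        rw [h3] at h2
        linarith [h2]
    have hpos1 : (0 : ℝ) ≤ (n : ℝ) + 1 := by positivity
    have hexp : (0 : ℝ) < Real.exp 1 := Real.exp_pos 1
    calc ((n + 1 : ℕ) : ℝ) ^ (n + 1)
        = ((n : ℝ) + 1) * ((n : ℝ) + 1) ^ n := by push_cast; ring
      _ ≤ ((n : ℝ) + 1) * (Real.exp 1 * (n : ℝ) ^ n) :=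
          mul_le_mul_of_nonneg_left hstep hpos1
      _ ≤ ((n : ℝ) + 1) * (Real.exp 1 * (Real.exp 1 ^ n * Nat.factorial n)) := by
          apply mul_le_mul_of_nonneg_left _ hpos1
          exact mul_le_mul_of_nonneg_left ih (le_of_lt hexp)
      _ = Real.exp 1 ^ (n + 1) * Nat.factorial (n + 1) := by
          rw [Nat.factorial_succ]; push_cast; ring

theorem factorial_ge_Omega (Ω : ℝ) (hΩ : 70 ≤ Ω)
    (k : ℕ) (hk : k = ⌊2 * Real.log Ω / Real.log (Real.log Ω)⌋₊) :
    Ω ≤ (Nat.factorial (k + 1) : ℝ) := by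
  have hΩ0 : (0 : ℝ) < Ω := by linarith
  set L := Real.log Ω with hLdef
  -- L ≥ 4
  have hL4 : (4 : ℝ) ≤ L := by
    rw [hLdef, Real.le_log_iff_exp_le hΩ0]
    have h4 : Real.exp 4 = Real.exp 1 ^ 4 := by
      rw [Real.exp_one_pow]; norm_num
    rw [h4]
    calc Real.exp 1 ^ 4 ≤ (2.7182818286 : ℝ) ^ 4 := by
          apply pow_le_pow_left₀ (le_of_lt (Real.exp_pos 1)) (le_of_lt Real.exp_one_lt_d9)
      _ ≤ 70 := by norm_num
      _ ≤ Ω := hΩ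
  have hL0 : (0 : ℝ) < L := by linarith
  set ℓ := Real.log L with hldef
  have hℓ0 : (0 : ℝ) < ℓ := Real.log_pos (by linarith)
  set t := Real.sqrt L with htdef
  have ht2 : (2 : ℝ) ≤ t := by
    rw [htdef, show (2:ℝ) = Real.sqrt 4 by rw [show (4:ℝ) = 2^2 by norm_num, Real.sqrt_sq]; norm_num]
    exact Real.sqrt_le_sqrt hL4
  have ht0 : (0 : ℝ) < t := by linarith
  have htL : t ^ 2 = L := Real.sq_sqrt (le_of_lt hL0)
  have hℓt : ℓ = 2 * Real.log t := by
    rw [hldef, ← htL, Real.log_pow]; push_cast; ring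
  -- e * log t ≤ t
  have hkey : Real.exp 1 * Real.log t ≤ t := by
    have h1 : Real.log (t / Real.exp 1) ≤ t / Real.exp 1 - 1 :=
      Real.log_le_sub_one_of_pos (by positivity)
    have h2 : Real.log (t / Real.exp 1) = Real.log t - 1 := by
      rw [Real.log_div (ne_of_gt ht0) (ne_of_gt (Real.exp_pos 1)), Real.log_exp]
    rw [h2] at h1
    have he : (0 : ℝ) < Real.exp 1 := Real.exp_pos 1
    have : Real.log t ≤ t / Real.exp 1 := by linarith
    calc Real.exp 1 * Real.log t ≤ Real.exp 1 * (t / Real.exp 1) :=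
          mul_le_mul_of_nonneg_left this (le_of_lt he)
      _ = t := by field_simp
  set x := 2 * L / ℓ with hxdef
  -- e * t ≤ x
  have hetx : Real.exp 1 * t ≤ x := by
    rw [hxdef, le_div_iff₀ hℓ0]
    have he : (0 : ℝ) < Real.exp 1 := Real.exp_pos 1
    have h1 : Real.exp 1 * ℓ ≤ 2 * t := by
      rw [hℓt]; nlinarith [hkey]
    nlinarith [htL]
  have hex : (0 : ℝ) < Real.exp 1 * t := by positivity
  have hx0 : (0 : ℝ) < x := lt_of_lt_of_le hex hetx
  -- log x ≥ 1 + ℓ/2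
  have hlogx : 1 + ℓ / 2 ≤ Real.log x := by
    have h1 : Real.log (Real.exp 1 * t) ≤ Real.log x := Real.log_le_log hex hetx
    have h2 : Real.log (Real.exp 1 * t) = 1 + Real.log t := by
      rw [Real.log_mul (ne_of_gt (Real.exp_pos 1)) (ne_of_gt ht0), Real.log_exp]
    rw [h2] at h1
    rw [hℓt]; linarith
  -- x * (log x - 1) ≥ L
  have hxL : L ≤ x * (Real.log x - 1) := by
    have h1 : x * (ℓ / 2) ≤ x * (Real.log x - 1) := by
      apply mul_le_mul_of_nonneg_left _ (le_of_lt hx0)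
      linarith
    have h2 : x * (ℓ / 2) = L := by
      rw [hxdef]; field_simp
    linarith
  -- N := k + 1 > x
  set N : ℝ := ((k + 1 : ℕ) : ℝ) with hNdef
  have hxN : x ≤ N := by
    have := Nat.lt_floor_add_one x
    rw [← hk] at this
    rw [hNdef]; push_cast
    linarith
  have hN0 : (0 : ℝ) < N := lt_of_lt_of_le hx0 hxN
  have hlogN : Real.log x ≤ Real.log N := Real.log_le_log hx0 hxN
  have hlogx1 : (1 : ℝ) ≤ Real.log x := by linarith [hlogx, hℓ0.le]
  have hNL : L ≤ N * (Real.log N - 1) := by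
    calc L ≤ x * (Real.log x - 1) := hxL
      _ ≤ N * (Real.log N - 1) := by
          apply mul_le_mul hxN (by linarith) (by linarith) (le_of_lt hN0)
  -- conclude
  have hfact := pow_le_exp_pow_mul_factorial (k + 1)
  have hNpow : N ^ (k + 1) = Real.exp ((k + 1 : ℕ) * Real.log N) := by
    rw [Real.exp_nat_mul, Real.exp_log hN0]
  have hEpow : Real.exp 1 ^ (k + 1) = Real.exp ((k + 1 : ℕ) : ℝ) := Real.exp_one_pow _
  have hΩexp : Ω = Real.exp L := (Real.exp_log hΩ0).symm
  have hmain : Real.exp L ≤ (Nat.factorial (k + 1) : ℝ) := by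
    have h1 : Real.exp (N * (Real.log N - 1)) ≤ (Nat.factorial (k + 1) : ℝ) := by
      have h2 : Real.exp (N * (Real.log N - 1)) * Real.exp ((k + 1 : ℕ) : ℝ)
          = Real.exp ((k + 1 : ℕ) * Real.log N) := by
        rw [← Real.exp_add]; congr 1; rw [hNdef]; ring
      have h3 : Real.exp (N * (Real.log N - 1)) * Real.exp 1 ^ (k + 1)
          ≤ Real.exp 1 ^ (k + 1) * (Nat.factorial (k + 1) : ℝ) := by
        rw [hEpow, h2, ← hNpow, ← hEpow, hNdef]
        exact_mod_cast hfact
      have hep : (0 : ℝ) < Real.exp 1 ^ (k + 1) := by positivity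
      nlinarith [Real.exp_pos (N * (Real.log N - 1))]
    calc Real.exp L ≤ Real.exp (N * (Real.log N - 1)) := Real.exp_le_exp.mpr hNL
      _ ≤ _ := h1
  rw [hΩexp]; exact hmain
end

section
/- Let A be an N × N complex matrix, and for positive integers m, k, p let d = m(k+1)+p and define the (d+1)N × (d+1)N block matrix C_{m,k,p}(A) = ∑_{j=0}^{d} |j⟩⟨j| ⊗ I − ∑_{i=0}^{m−1} ∑_{j=1}^{k} |i(k+1)+j⟩⟨i(k+1)+j−1| ⊗ (A/j) − ∑_{i=0}^{m−1} ∑_{j=0}^{k} |(i+1)(k+1)⟩⟨i(k+1)+j| ⊗ I − ∑_{j=d−p+1}^{d} |j⟩⟨j−1| ⊗ I. If ‖A‖ ≤ 1 (spectral norm) and k ≥ 5, then ‖C_{m,k,p}(A)‖ ≤ 2√k. -/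
/-!
Write `C = 1 - S - (L + P)`, where `S` is the third sum (row `(i+1)(k+1)` collects the `k + 1`
columns of the `i`-th block) and `L + P` is the weighted shift formed by the other two sums.
Each piece is a sum of blocks `|r⟩⟨c| ⊗ B` in which no column index repeats and each row index
repeats at most `K` times; pairing with unit vectors and applying Cauchy–Schwarz bounds the norm
of such a matrix by `max ‖B‖ * √K`. So `‖S‖ ≤ √(k+1)`, `‖L + P‖ ≤ 1` because `‖A / j‖ ≤ 1`,
and `1 + √(k+1) + 1 ≤ 2√k` once `k ≥ 5`.
-/

open Matrix
open scoped Kronecker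

private lemma idx_lt {m k p i j : ℕ} (hi : i < m) (hj : j < k + 1) :
    i * (k + 1) + j < m * (k + 1) + p + 1 :=
  calc i * (k + 1) + j < i * (k + 1) + (k + 1) := by omega
    _ = (i + 1) * (k + 1) := by ring
    _ ≤ m * (k + 1) := Nat.mul_le_mul_right _ hi
    _ ≤ m * (k + 1) + p + 1 := by omega

private lemma idx_lt' {m k p i : ℕ} (hi : i < m) :
    (i + 1) * (k + 1) ≤ m * (k + 1) + p :=
  le_trans (Nat.mul_le_mul_right _ hi) (by omega)

/-- The matrix `C_{m,k,p}(A)` of Berry–Childs–Ostrander–Wang, acting on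
`ℂ^{d+1} ⊗ ℂ^N` with `d = m(k+1)+p`. -/
noncomputable def Cmkp (m k p N : ℕ) (A : Matrix (Fin N) (Fin N) ℂ) :
    Matrix (Fin (m * (k + 1) + p + 1) × Fin N) (Fin (m * (k + 1) + p + 1) × Fin N) ℂ :=
  (∑ j : Fin (m * (k + 1) + p + 1), single j j (1 : ℂ)) ⊗ₖ (1 : Matrix (Fin N) (Fin N) ℂ)
  - ∑ i : Fin m, ∑ j : Fin k,
      single
        (⟨i * (k + 1) + (j + 1), idx_lt i.2 (by omega)⟩ : Fin (m * (k + 1) + p + 1))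
        (⟨i * (k + 1) + j, idx_lt i.2 (by omega)⟩ : Fin (m * (k + 1) + p + 1)) (1 : ℂ)
        ⊗ₖ ((((j : ℕ) + 1 : ℂ))⁻¹ • A)
  - ∑ i : Fin m, ∑ j : Fin (k + 1),
      single
        (⟨(i + 1) * (k + 1), Nat.lt_succ_of_le (idx_lt' i.2)⟩ : Fin (m * (k + 1) + p + 1))
        (⟨i * (k + 1) + j, idx_lt i.2 j.2⟩ : Fin (m * (k + 1) + p + 1)) (1 : ℂ)
        ⊗ₖ (1 : Matrix (Fin N) (Fin N) ℂ)
  - ∑ j : Fin p,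
      single
        (⟨m * (k + 1) + (j + 1), by omega⟩ : Fin (m * (k + 1) + p + 1))
        (⟨m * (k + 1) + j, by omega⟩ : Fin (m * (k + 1) + p + 1)) (1 : ℂ)
        ⊗ₖ (1 : Matrix (Fin N) (Fin N) ℂ)

open Function
open scoped InnerProductSpace

section BlockMatrix

variable {𝕜 : Type*} [RCLike 𝕜] {n m : Type*} [Fintype n] [Fintype m]

def blockVec (x : EuclideanSpace 𝕜 (n × m)) (a : n) : EuclideanSpace 𝕜 m :=
  WithLp.toLp 2 fun b => x (a, b)

theorem sum_norm_sq_blockVec (x : EuclideanSpace 𝕜 (n × m)) :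
    ∑ a, ‖blockVec x a‖ ^ 2 = ‖x‖ ^ 2 := by
  simp [blockVec, EuclideanSpace.norm_sq_eq, Fintype.sum_prod_type]

theorem sum_norm_sq_blockVec_comp_le {ι : Type*} [Fintype ι] (x : EuclideanSpace 𝕜 (n × m))
    {f : ι → n} (hf : Injective f) : ∑ i, ‖blockVec x (f i)‖ ^ 2 ≤ ‖x‖ ^ 2 :=
  (Finset.sum_map _ ⟨f, hf⟩ fun a => ‖blockVec x a‖ ^ 2).symm.trans_le <|
    (Finset.sum_le_univ_sum_of_nonneg fun _ => by positivity).trans_eq (sum_norm_sq_blockVec x)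

variable [DecidableEq n] [DecidableEq m]

theorem norm_toEuclideanCLM_one_le : ‖toEuclideanCLM (𝕜 := 𝕜) (1 : Matrix n n 𝕜)‖ ≤ 1 := by
  rw [map_one]
  exact ContinuousLinearMap.norm_id_le

theorem inner_toEuclideanCLM_single_kronecker (a a' : n) (B : Matrix m m 𝕜)
    (x y : EuclideanSpace 𝕜 (n × m)) :
    ⟪y, toEuclideanCLM (𝕜 := 𝕜) (single a a' (1 : 𝕜) ⊗ₖ B) x⟫_𝕜
      = ⟪blockVec y a, toEuclideanCLM (𝕜 := 𝕜) B (blockVec x a')⟫_𝕜 := by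
  simp [blockVec, PiLp.inner_apply, mulVec, dotProduct, Fintype.sum_prod_type, single_apply,
    ite_and]

theorem norm_toEuclideanCLM_sum_sum_single_kronecker_le {ι κ : Type*} [Fintype ι] [Fintype κ]
    {r : ι → n} {c : ι → κ → n} {B : ι → κ → Matrix m m 𝕜} {β : ℝ} (hr : Injective r)
    (hc : Injective (uncurry c)) (hβ : 0 ≤ β)
    (hB : ∀ i j, ‖toEuclideanCLM (𝕜 := 𝕜) (B i j)‖ ≤ β) :
    ‖toEuclideanCLM (𝕜 := 𝕜) (∑ i, ∑ j, single (r i) (c i j) (1 : 𝕜) ⊗ₖ B i j)‖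
      ≤ β * √(Fintype.card κ) := by
  set M := ∑ i, ∑ j, single (r i) (c i j) (1 : 𝕜) ⊗ₖ B i j with hM
  refine ContinuousLinearMap.opNorm_le_of_re_inner_le (by positivity) fun x y hx hy => ?_
  have hrows : ∑ q : ι × κ, ‖blockVec y (r q.1)‖ ^ 2 ≤ Fintype.card κ := by
    simpa [Fintype.sum_prod_type, ← Finset.mul_sum, hy] using
      mul_le_mul_of_nonneg_left (sum_norm_sq_blockVec_comp_le y hr) (Fintype.card κ).cast_nonneg
  have hcols : ∑ q : ι × κ, ‖blockVec x (uncurry c q)‖ ^ 2 ≤ 1 := by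
    simpa [hx] using sum_norm_sq_blockVec_comp_le x hc
  calc RCLike.re ⟪toEuclideanCLM (𝕜 := 𝕜) M x, y⟫_𝕜
      ≤ ‖⟪y, toEuclideanCLM (𝕜 := 𝕜) M x⟫_𝕜‖ :=
        (RCLike.re_le_norm _).trans_eq (norm_inner_symm _ _)
    _ = ‖∑ i, ∑ j, ⟪blockVec y (r i), toEuclideanCLM (𝕜 := 𝕜) (B i j) (blockVec x (c i j))⟫_𝕜‖ := by
        simp only [hM, map_sum, _root_.sum_apply, inner_sum, inner_toEuclideanCLM_single_kronecker]
    _ ≤ ∑ q : ι × κ, β * (‖blockVec y (r q.1)‖ * ‖blockVec x (uncurry c q)‖) := by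
        rw [Fintype.sum_prod_type]
        refine (norm_sum_le _ _).trans <| Finset.sum_le_sum fun i _ => (norm_sum_le _ _).trans <|
          Finset.sum_le_sum fun j _ => (norm_inner_le_norm _ _).trans ?_
        rw [mul_left_comm]
        exact mul_le_mul_of_nonneg_left
          ((toEuclideanCLM (𝕜 := 𝕜) (B i j)).le_of_opNorm_le (hB i j) _) (norm_nonneg _)
    _ ≤ β * (√(Fintype.card κ) * √1) := by
        rw [← Finset.mul_sum]
        gcongr
        exact (Real.sum_mul_le_sqrt_mul_sqrt _ _ _).trans (by gcongr)
    _ = β * √(Fintype.card κ) := by simp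

theorem norm_toEuclideanCLM_sum_single_kronecker_add_sum_le {ι ι' : Type*} [Fintype ι]
    [Fintype ι'] {r c : ι → n} {r' c' : ι' → n} {B : ι → Matrix m m 𝕜} {B' : ι' → Matrix m m 𝕜}
    {β : ℝ} (hr : Injective (Sum.elim r r')) (hc : Injective (Sum.elim c c')) (hβ : 0 ≤ β)
    (hB : ∀ i, ‖toEuclideanCLM (𝕜 := 𝕜) (B i)‖ ≤ β)
    (hB' : ∀ i, ‖toEuclideanCLM (𝕜 := 𝕜) (B' i)‖ ≤ β) :
    ‖toEuclideanCLM (𝕜 := 𝕜)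
      (∑ i, single (r i) (c i) (1 : 𝕜) ⊗ₖ B i + ∑ i, single (r' i) (c' i) (1 : 𝕜) ⊗ₖ B' i)‖
      ≤ β := by
  have := norm_toEuclideanCLM_sum_sum_single_kronecker_le (κ := Unit)
    (c := fun q _ => Sum.elim c c' q) (B := fun q _ => Sum.elim B B' q) hr
    (hc.comp Prod.fst_injective) hβ (by rintro (i | i) - <;> simp [hB, hB'])
  simpa [Fintype.sum_sum_type] using this

end BlockMatrix

section Indices

variable {m D : ℕ}

theorem mul_add_eq_mul_add_iff {i i' j j' k : ℕ} (hj : j < k) (hj' : j' < k) :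
    i * k + j = i' * k + j' ↔ i = i' ∧ j = j' := by
  refine ⟨fun h => ?_, fun ⟨hi, hj⟩ => hi ▸ hj ▸ rfl⟩
  obtain rfl : j = j' := by rw [← Nat.mul_add_mod_of_lt hj, h, Nat.mul_add_mod_of_lt hj']
  exact ⟨Nat.eq_of_mul_eq_mul_right (by omega) (Nat.add_right_cancel h), rfl⟩

theorem injective_finMk_succ_mul {K : ℕ} (hK : 0 < K)
    {h : ∀ i : Fin m, ((i : ℕ) + 1) * K < D} :
    Injective fun i : Fin m => (⟨(i + 1) * K, h i⟩ : Fin D) := by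
  intro a b hab
  simpa [Fin.ext_iff, hK.ne'] using hab

theorem injective_uncurry_finMk_mul_add {K : ℕ}
    {h : ∀ (i : Fin m) (j : Fin K), (i : ℕ) * K + j < D} :
    Injective (uncurry fun (i : Fin m) (j : Fin K) => (⟨i * K + j, h i j⟩ : Fin D)) := by
  rintro ⟨i, j⟩ ⟨i', j'⟩ hq
  obtain ⟨hi, hj⟩ := (mul_add_eq_mul_add_iff j.2 j'.2).1 (Fin.mk.inj hq)
  exact Prod.ext (Fin.ext hi) (Fin.ext hj)

theorem injective_sumElim_finMk_mul_add {k p s : ℕ} (hs : s ≤ 1)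
    {h : ∀ q : Fin m × Fin k, (q.1 : ℕ) * (k + 1) + (q.2 + s) < D}
    {h' : ∀ j : Fin p, m * (k + 1) + (j + s) < D} :
    Injective (Sum.elim (fun q : Fin m × Fin k => (⟨q.1 * (k + 1) + (q.2 + s), h q⟩ : Fin D))
      fun j : Fin p => (⟨m * (k + 1) + (j + s), h' j⟩ : Fin D)) := by
  refine Injective.sumElim ?_ ?_ ?_
  · rintro ⟨i, j⟩ ⟨i', j'⟩ hq
    obtain ⟨hi, hj⟩ := (mul_add_eq_mul_add_iff (by omega) (by omega)).1 (Fin.mk.inj hq)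
    exact Prod.ext (Fin.ext hi) (Fin.ext (by omega))
  · intro j j' hj
    exact Fin.ext (by simpa using Fin.mk.inj hj)
  · rintro ⟨i, j⟩ j' hq
    have hlt : (i : ℕ) * (k + 1) + (j + s) < m * (k + 1) := by nlinarith [i.2, j.2]
    have := Fin.val_eq_of_eq hq
    dsimp only at this
    omega

end Indices

theorem two_add_sqrt_add_one_le_two_mul_sqrt {x : ℝ} (hx : 5 ≤ x) : 2 + √(x + 1) ≤ 2 * √x := by
  have hs : √(x + 1) ≤ (3 * x - 5) / 4 := Real.sqrt_le_iff.2 ⟨by linarith, by nlinarith⟩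
  have hsq : (2 + √(x + 1)) ^ 2 ≤ (2 * √x) ^ 2 := by
    rw [mul_pow, add_sq, Real.sq_sqrt (by linarith), Real.sq_sqrt (by linarith)]
    linarith
  exact pow_le_pow_iff_left₀ (by positivity) (by positivity) two_ne_zero |>.1 hsq

theorem Cmkp_norm_le_general (m k p N : ℕ) (hk : 5 ≤ k)
    (A : Matrix (Fin N) (Fin N) ℂ)
    (hA : ‖Matrix.toEuclideanCLM (𝕜 := ℂ) A‖ ≤ 1) :
    ‖Matrix.toEuclideanCLM (𝕜 := ℂ) (Cmkp m k p N A)‖ ≤ 2 * Real.sqrt k := by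
  unfold Cmkp
  rw [sum_single_one, one_kronecker_one, sub_right_comm 1, sub_sub _ _ (∑ j : Fin p, _),
    map_sub, map_sub]
  have hk' : 1 + √((k : ℝ) + 1) + 1 ≤ 2 * √k := by
    linarith [two_add_sqrt_add_one_le_two_mul_sqrt (x := k) (by exact_mod_cast hk)]
  refine (norm_sub_le _ _).trans <| (add_le_add (norm_sub_le _ _) le_rfl).trans <|
    (add_le_add_three norm_toEuclideanCLM_one_le ?_ ?_).trans hk'
  · refine (norm_toEuclideanCLM_sum_sum_single_kronecker_le (injective_finMk_succ_mul k.succ_pos)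
      injective_uncurry_finMk_mul_add zero_le_one fun _ _ => norm_toEuclideanCLM_one_le).trans_eq ?_
    simp
  · rw [← Finset.sum_product', Finset.univ_product_univ]
    refine norm_toEuclideanCLM_sum_single_kronecker_add_sum_le
      (injective_sumElim_finMk_mul_add le_rfl) (injective_sumElim_finMk_mul_add zero_le_one)
      zero_le_one ?_ fun _ => norm_toEuclideanCLM_one_le
    rintro ⟨-, j⟩
    rw [map_smul, norm_smul, norm_inv, ← Nat.cast_succ, Complex.norm_natCast]
    exact mul_le_one₀ (inv_le_one_of_one_le₀ (by simp)) (norm_nonneg _) hA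

theorem Cmkp_norm_le (m k p N : ℕ) (hm : 0 < m) (hp : 0 < p) (hk : 5 ≤ k)
    (A : Matrix (Fin N) (Fin N) ℂ)
    (hA : ‖Matrix.toEuclideanCLM (𝕜 := ℂ) A‖ ≤ 1) :
    ‖Matrix.toEuclideanCLM (𝕜 := ℂ) (Cmkp m k p N A)‖ ≤ 2 * Real.sqrt k :=
  Cmkp_norm_le_general m k p N hk A hA
end
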